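/- arXiv:1708.00958 — 4 statements merged into one kernel-verified Lean document; each statement's English description precedes it below -/
import Mathlib

section
/- Let (Ω, 𝒜, μ) be a probability space and Φ₁, …, Φₘ : Ω → ℝ square-integrable functions that are orthonormal, i.e. ∫_Ω Φᵢ Φⱼ dμ = 1 if i = j and 0 if i ≠ j. Let B : Ω → ℝ^{n×n} be measurable such that every entry of B Φᵢ Φⱼ is μ-integrable for all i, j, and suppose that for μ-almost every ω ∈ Ω the symmetric part B(ω) + B(ω)ᵀ is negative definite. Then the block matrix B̂ ∈ ℝ^{mn×mn} with blocks B̂_{ij} = ∫_Ω B(ω) Φᵢ(ω) Φⱼ(ω) dμ(ω) has a negative definite symmetric part, i.e. zᵀ(B̂ + B̂ᵀ)z < 0 for every nonzero z ∈ ℝ^{mn}. -/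
/-!
Read `z ∈ ℝ^{mn}` as coefficient vectors `zᵢ ∈ ℝⁿ` of the random vector `f = ∑ᵢ zᵢ Φᵢ`.
Expanding the quadratic form of `B̂` gives `zᵀ (B̂ + B̂ᵀ) z = ∫ fᵀ (B + Bᵀ) f dμ`, whose
integrand is `≤ 0` almost everywhere and `< 0` wherever `f ≠ 0`. So the integral vanishes
only if `f = 0` almost everywhere, and then orthonormality (`∫ f Φᵢ dμ = zᵢ`) forces `z = 0`.
-/

open Matrix MeasureTheory

lemma MeasureTheory.integral_neg_of_ae_nonpos {α : Type*} [MeasurableSpace α] {μ : Measure α}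
    {g : α → ℝ} (hg : Integrable g μ) (hle : g ≤ᵐ[μ] 0) (hne : ¬g =ᵐ[μ] 0) :
    ∫ x, g x ∂μ < 0 :=
  (integral_nonpos_of_ae hle).lt_of_ne fun h =>
    hne <| (integral_eq_iff_of_ae_le hg (integrable_zero _ _ _) hle).1 (by simpa using h)

lemma Matrix.dotProduct_mulVec_eq_sum {κ : Type*} [Fintype κ] (A : Matrix κ κ ℝ) (v : κ → ℝ) :
    v ⬝ᵥ (A *ᵥ v) = ∑ k, ∑ l, v k * v l * A k l := by
  simp only [dotProduct, mulVec, Finset.mul_sum]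
  exact Finset.sum_congr rfl fun _ _ => Finset.sum_congr rfl fun _ _ => by ring

namespace StochasticGalerkin

variable {Ω ι κ : Type*}

def expansion [Fintype ι] (Φ : ι → Ω → ℝ) (z : ι × κ → ℝ) (ω : Ω) : κ → ℝ :=
  fun k => ∑ i, z (i, k) * Φ i ω

lemma expansion_dotProduct_mulVec [Fintype ι] [Fintype κ] (Φ : ι → Ω → ℝ)
    (B : Ω → Matrix κ κ ℝ) (z : ι × κ → ℝ) (ω : Ω) :
    expansion Φ z ω ⬝ᵥ (B ω *ᵥ expansion Φ z ω)
      = ∑ p, ∑ q, z p * z q * (B ω p.2 q.2 * Φ p.1 ω * Φ q.1 ω) := by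
  simp only [dotProduct_mulVec_eq_sum, expansion, Finset.sum_mul, Finset.mul_sum,
    Fintype.sum_prod_type_right]
  refine Finset.sum_congr rfl fun k _ => ?_
  rw [Finset.sum_comm_cycle]
  exact Finset.sum_congr rfl fun i _ => Finset.sum_congr rfl fun l _ =>
    Finset.sum_congr rfl fun j _ => by ring

variable [MeasurableSpace Ω] {μ : Measure Ω}

noncomputable def projection (μ : Measure Ω) (Φ : ι → Ω → ℝ) (B : Ω → Matrix κ κ ℝ) :
    Matrix (ι × κ) (ι × κ) ℝ :=
  Matrix.of fun p q => ∫ ω, B ω p.2 q.2 * Φ p.1 ω * Φ q.1 ω ∂μ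

lemma projection_transpose (Φ : ι → Ω → ℝ) (B : Ω → Matrix κ κ ℝ) :
    (projection μ Φ B)ᵀ = projection μ Φ fun ω => (B ω)ᵀ := by
  ext p q
  simp only [projection, transpose_apply, of_apply, mul_right_comm]

lemma projection_add {Φ : ι → Ω → ℝ} {B C : Ω → Matrix κ κ ℝ}
    (hB : ∀ i j k l, Integrable (fun ω => B ω k l * Φ i ω * Φ j ω) μ)
    (hC : ∀ i j k l, Integrable (fun ω => C ω k l * Φ i ω * Φ j ω) μ) :
    projection μ Φ (fun ω => B ω + C ω) = projection μ Φ B + projection μ Φ C := by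
  ext p q
  simp only [projection, Matrix.add_apply, of_apply, add_mul]
  exact integral_add (hB _ _ _ _) (hC _ _ _ _)

variable [Fintype ι]

lemma integral_expansion_mul [DecidableEq ι] {Φ : ι → Ω → ℝ}
    (hΦ : ∀ i j, Integrable (fun ω => Φ i ω * Φ j ω) μ)
    (hΦortho : ∀ i j, ∫ ω, Φ i ω * Φ j ω ∂μ = if i = j then 1 else 0)
    (z : ι × κ → ℝ) (i : ι) (k : κ) :
    ∫ ω, expansion Φ z ω k * Φ i ω ∂μ = z (i, k) := by
  simp only [expansion, Finset.sum_mul, mul_assoc]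
  rw [integral_finsetSum _ fun j _ => (hΦ j i).const_mul _]
  simp [integral_const_mul, hΦortho]

lemma eq_zero_of_expansion_ae_eq_zero [DecidableEq ι] {Φ : ι → Ω → ℝ}
    (hΦ : ∀ i j, Integrable (fun ω => Φ i ω * Φ j ω) μ)
    (hΦortho : ∀ i j, ∫ ω, Φ i ω * Φ j ω ∂μ = if i = j then 1 else 0)
    {z : ι × κ → ℝ} (hz : ∀ᵐ ω ∂μ, expansion Φ z ω = 0) : z = 0 := by
  ext ⟨i, k⟩
  rw [← integral_expansion_mul hΦ hΦortho z i k, Pi.zero_apply]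
  refine integral_eq_zero_of_ae ?_
  filter_upwards [hz] with ω hω
  simp [hω]

variable [Fintype κ] {Φ : ι → Ω → ℝ} {B : Ω → Matrix κ κ ℝ}

lemma integrable_expansion_dotProduct_mulVec
    (hB : ∀ i j k l, Integrable (fun ω => B ω k l * Φ i ω * Φ j ω) μ) (z : ι × κ → ℝ) :
    Integrable (fun ω => expansion Φ z ω ⬝ᵥ (B ω *ᵥ expansion Φ z ω)) μ := by
  simp only [expansion_dotProduct_mulVec]
  exact integrable_finsetSum _ fun p _ => integrable_finsetSum _ fun q _ =>
    (hB _ _ _ _).const_mul _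

lemma dotProduct_projection_mulVec
    (hB : ∀ i j k l, Integrable (fun ω => B ω k l * Φ i ω * Φ j ω) μ) (z : ι × κ → ℝ) :
    z ⬝ᵥ (projection μ Φ B *ᵥ z)
      = ∫ ω, expansion Φ z ω ⬝ᵥ (B ω *ᵥ expansion Φ z ω) ∂μ := by
  simp only [expansion_dotProduct_mulVec]
  simp only [dotProduct_mulVec_eq_sum, projection, of_apply]
  rw [integral_finsetSum _ fun p _ => integrable_finsetSum _ fun q _ =>
    (hB _ _ _ _).const_mul _]
  refine Finset.sum_congr rfl fun p _ => ?_
  rw [integral_finsetSum _ fun q _ => (hB _ _ _ _).const_mul _]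
  exact Finset.sum_congr rfl fun q _ => (integral_const_mul _ _).symm

end StochasticGalerkin

open StochasticGalerkin in
theorem stmt_6_general (n m : ℕ) {Ω : Type*} [MeasurableSpace Ω]
    (μ : Measure Ω)
    (Φ : Fin m → Ω → ℝ)
    (hΦL2 : ∀ i, MemLp (Φ i) 2 μ)
    (hΦortho : ∀ i j, ∫ ω, Φ i ω * Φ j ω ∂μ = if i = j then 1 else 0)
    (B : Ω → Matrix (Fin n) (Fin n) ℝ)
    (hBint : ∀ i j k l, Integrable (fun ω => B ω k l * Φ i ω * Φ j ω) μ)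
    (hBneg : ∀ᵐ ω ∂μ, ∀ z : Fin n → ℝ, z ≠ 0 → z ⬝ᵥ ((B ω + (B ω)ᵀ) *ᵥ z) < 0) :
    ∀ z : Fin m × Fin n → ℝ, z ≠ 0 →
      (letI Bhat : Matrix (Fin m × Fin n) (Fin m × Fin n) ℝ :=
        Matrix.of (fun p q => ∫ ω, B ω p.2 q.2 * Φ p.1 ω * Φ q.1 ω ∂μ)
       z ⬝ᵥ ((Bhat + Bhatᵀ) *ᵥ z)) < 0 := by
  intro z hz
  have hΦ i j : Integrable (fun ω => Φ i ω * Φ j ω) μ := (hΦL2 i).integrable_mul (hΦL2 j)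
  have hBt i j k l : Integrable (fun ω => (B ω)ᵀ k l * Φ i ω * Φ j ω) μ := hBint i j l k
  have hsym i j k l : Integrable (fun ω => (B ω + (B ω)ᵀ) k l * Φ i ω * Φ j ω) μ := by
    simp only [Matrix.add_apply, add_mul]
    exact (hBint i j k l).add (hBt i j k l)
  change z ⬝ᵥ ((projection μ Φ B + (projection μ Φ B)ᵀ) *ᵥ z) < 0
  rw [projection_transpose, ← projection_add hBint hBt, dotProduct_projection_mulVec hsym]
  set f := expansion Φ z
  refine integral_neg_of_ae_nonpos (integrable_expansion_dotProduct_mulVec hsym z) ?_ ?_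
  · filter_upwards [hBneg] with ω hω
    by_cases hf : f ω = 0
    · simp [hf]
    · exact (hω _ hf).le
  · intro hzero
    refine hz (eq_zero_of_expansion_ae_eq_zero hΦ hΦortho ?_)
    filter_upwards [hBneg, hzero] with ω hω hω0
    by_contra hf
    exact (hω _ hf).ne hω0

/-- If `Φ₁, …, Φₘ` are orthonormal in `L²(μ)` and the symmetric part of `B(ω)`
is negative definite for a.e. `ω`, then the stochastic Galerkin projection
`B̂` (blocks `B̂_{ij} = ∫ B Φᵢ Φⱼ dμ`) has a negative definite symmetric part. -/
theorem stmt_6 (n m : ℕ) {Ω : Type*} [MeasurableSpace Ω]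
    (μ : Measure Ω) [IsProbabilityMeasure μ]
    (Φ : Fin m → Ω → ℝ) (hΦmeas : ∀ i, Measurable (Φ i))
    (hΦL2 : ∀ i, MemLp (Φ i) 2 μ)
    (hΦortho : ∀ i j, ∫ ω, Φ i ω * Φ j ω ∂μ = if i = j then 1 else 0)
    (B : Ω → Matrix (Fin n) (Fin n) ℝ)
    (hBmeas : ∀ k l, Measurable (fun ω => B ω k l))
    (hBint : ∀ i j k l, Integrable (fun ω => B ω k l * Φ i ω * Φ j ω) μ)
    (hBneg : ∀ᵐ ω ∂μ, ∀ z : Fin n → ℝ, z ≠ 0 → z ⬝ᵥ ((B ω + (B ω)ᵀ) *ᵥ z) < 0) :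
    ∀ z : Fin m × Fin n → ℝ, z ≠ 0 →
      (letI Bhat : Matrix (Fin m × Fin n) (Fin m × Fin n) ℝ :=
        Matrix.of (fun p q => ∫ ω, B ω p.2 q.2 * Φ p.1 ω * Φ q.1 ω ∂μ)
       z ⬝ᵥ ((Bhat + Bhatᵀ) *ᵥ z)) < 0 :=
  stmt_6_general n m μ Φ hΦL2 hΦortho B hBint hBneg
end

section
/- Let (Ω, 𝒜, μ) be a probability space and Φ₁, …, Φₘ : Ω → ℝ square-integrable functions that are orthonormal, i.e. ∫_Ω Φᵢ Φⱼ dμ = 1 if i = j and 0 if i ≠ j. Let B : Ω → ℝ^{n×n} be measurable such that every entry of B Φᵢ Φⱼ is μ-integrable for all i, j, and suppose that for μ-almost every ω ∈ Ω the symmetric part B(ω) + B(ω)ᵀ is negative definite. Then the block matrix B̂ ∈ ℝ^{mn×mn} with blocks B̂_{ij} = ∫_Ω B(ω) Φᵢ(ω) Φⱼ(ω) dμ(ω) is a stable matrix, i.e. every eigenvalue λ ∈ ℂ of B̂ satisfies Re λ < 0. -/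
open Matrix MeasureTheory
open scoped ComplexOrder

/-!
For a coefficient vector `z = (zᵢ)ᵢ` put `z(ω) = ∑ᵢ zᵢ Φᵢ(ω)`. Then `zᵀ B̂ z = ∫ z(ω)ᵀ B(ω) z(ω) dμ`,
which is negative unless `z(ω) = 0` almost everywhere; by orthonormality `zᵢ = ∫ z(ω) Φᵢ dμ`, so
that happens only for `z = 0`. Hence the real quadratic form of `B̂` is negative definite. For an
eigenpair `B̂ v = λ v` the real part of `v* B̂ v = λ ‖v‖²` is the sum of that quadratic form at
`Re v` and at `Im v`, so `Re λ < 0`.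
-/

namespace Matrix

variable {ι : Type*} [Fintype ι]

theorem dotProduct_add_transpose_mulVec {R : Type*} [CommRing R] (A : Matrix ι ι R)
    (z : ι → R) : z ⬝ᵥ ((A + Aᵀ) *ᵥ z) = 2 * (z ⬝ᵥ (A *ᵥ z)) := by
  rw [add_mulVec, dotProduct_add, dotProduct_mulVec z Aᵀ, vecMul_transpose,
    dotProduct_comm (A *ᵥ z)]
  ring

theorem re_star_dotProduct_map_ofReal_mulVec (A : Matrix ι ι ℝ) (v : ι → ℂ) :
    (star v ⬝ᵥ (A.map Complex.ofReal *ᵥ v)).re =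
      (fun i => (v i).re) ⬝ᵥ (A *ᵥ fun i => (v i).re) +
        (fun i => (v i).im) ⬝ᵥ (A *ᵥ fun i => (v i).im) := by
  simp only [dotProduct, mulVec, Complex.re_sum, Finset.mul_sum, ← Finset.sum_add_distrib]
  refine Finset.sum_congr rfl fun i _ => Finset.sum_congr rfl fun j _ => ?_
  simp only [Pi.star_apply, map_apply, Complex.mul_re, Complex.mul_im, Complex.star_def,
    Complex.conj_re, Complex.conj_im, Complex.ofReal_re, Complex.ofReal_im]
  ring

theorem re_lt_zero_of_mem_spectrum_map_ofReal [DecidableEq ι] {A : Matrix ι ι ℝ}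
    (hA : ∀ z : ι → ℝ, z ≠ 0 → z ⬝ᵥ (A *ᵥ z) < 0) {lam : ℂ}
    (hlam : lam ∈ spectrum ℂ (A.map Complex.ofReal)) : lam.re < 0 := by
  rw [← spectrum_toLin', ← Module.End.hasEigenvalue_iff_mem_spectrum] at hlam
  obtain ⟨v, hv_mem, hv0⟩ := hlam.exists_hasEigenvector
  rw [Module.End.mem_eigenspace_iff, toLin'_apply] at hv_mem
  set x : ι → ℝ := fun i => (v i).re
  set y : ι → ℝ := fun i => (v i).im
  have hA_nonpos : ∀ z : ι → ℝ, z ⬝ᵥ (A *ᵥ z) ≤ 0 := fun z => by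
    rcases eq_or_ne z 0 with rfl | hz
    · simp
    · exact (hA z hz).le
  have hquad : x ⬝ᵥ (A *ᵥ x) + y ⬝ᵥ (A *ᵥ y) < 0 := by
    by_cases hx : x = 0
    · have hy : y ≠ 0 := fun hy => hv0 <| funext fun i =>
        Complex.ext (congrFun hx i) (congrFun hy i)
      linarith [hA_nonpos x, hA y hy]
    · linarith [hA x hx, hA_nonpos y]
  obtain ⟨hnorm_re, hnorm_im⟩ := Complex.nonneg_iff.mp (dotProduct_star_self_nonneg v)
  have hre : (star v ⬝ᵥ (A.map Complex.ofReal *ᵥ v)).re = lam.re * (star v ⬝ᵥ v).re := by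
    rw [hv_mem, dotProduct_smul, smul_eq_mul, Complex.mul_re, ← hnorm_im]
    ring
  rw [re_star_dotProduct_map_ofReal_mulVec] at hre
  by_contra! hlam_re
  nlinarith

end Matrix

section Galerkin

variable {ι κ Ω : Type*}

noncomputable def galerkinMatrix [MeasurableSpace Ω] (μ : Measure Ω) (Φ : ι → Ω → ℝ)
    (B : Ω → Matrix κ κ ℝ) : Matrix (ι × κ) (ι × κ) ℝ :=
  Matrix.of fun p q => ∫ ω, B ω p.2 q.2 * Φ p.1 ω * Φ q.1 ω ∂μ

def galerkinExpansion [Fintype ι] (Φ : ι → Ω → ℝ) (z : ι × κ → ℝ) (ω : Ω) : κ → ℝ :=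
  fun k => ∑ i, z (i, k) * Φ i ω

variable [Fintype ι]

theorem galerkinExpansion_dotProduct_mulVec [Fintype κ] (Φ : ι → Ω → ℝ)
    (B : Ω → Matrix κ κ ℝ) (z : ι × κ → ℝ) (ω : Ω) :
    galerkinExpansion Φ z ω ⬝ᵥ (B ω *ᵥ galerkinExpansion Φ z ω) =
      ∑ p, ∑ q, z p * z q * (B ω p.2 q.2 * Φ p.1 ω * Φ q.1 ω) := by
  simp only [galerkinExpansion, dotProduct, mulVec, Fintype.sum_prod_type_right]
  refine Finset.sum_congr rfl fun k _ => ?_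
  rw [Finset.sum_mul]
  refine Finset.sum_congr rfl fun i _ => ?_
  simp only [Finset.mul_sum]
  refine Finset.sum_congr rfl fun l _ => Finset.sum_congr rfl fun j _ => ?_
  ring

variable [MeasurableSpace Ω] {μ : Measure Ω}

theorem integral_galerkinExpansion_mul [DecidableEq ι] {Φ : ι → Ω → ℝ}
    (hΦL2 : ∀ i, MemLp (Φ i) 2 μ)
    (hΦortho : ∀ i j, ∫ ω, Φ i ω * Φ j ω ∂μ = if i = j then 1 else 0)
    (z : ι × κ → ℝ) (j : ι) (k : κ) :
    ∫ ω, galerkinExpansion Φ z ω k * Φ j ω ∂μ = z (j, k) := by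
  simp only [galerkinExpansion, Finset.sum_mul, mul_assoc]
  rw [integral_finsetSum _ fun i _ => ?_]
  · simp [integral_const_mul, hΦortho]
  · exact ((hΦL2 i).integrable_mul (hΦL2 j)).const_mul _

theorem eq_zero_of_galerkinExpansion_ae_eq_zero [DecidableEq ι] {Φ : ι → Ω → ℝ}
    (hΦL2 : ∀ i, MemLp (Φ i) 2 μ)
    (hΦortho : ∀ i j, ∫ ω, Φ i ω * Φ j ω ∂μ = if i = j then 1 else 0)
    {z : ι × κ → ℝ} (hz : ∀ᵐ ω ∂μ, galerkinExpansion Φ z ω = 0) : z = 0 := by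
  funext ⟨j, k⟩
  rw [← integral_galerkinExpansion_mul hΦL2 hΦortho z j k]
  refine integral_eq_zero_of_ae (hz.mono fun ω hω => ?_)
  simp [hω]

variable [Fintype κ]

theorem integrable_galerkinExpansion_dotProduct_mulVec {Φ : ι → Ω → ℝ}
    {B : Ω → Matrix κ κ ℝ}
    (hBint : ∀ i j k l, Integrable (fun ω => B ω k l * Φ i ω * Φ j ω) μ) (z : ι × κ → ℝ) :
    Integrable (fun ω => galerkinExpansion Φ z ω ⬝ᵥ (B ω *ᵥ galerkinExpansion Φ z ω)) μ := by
  simp_rw [galerkinExpansion_dotProduct_mulVec]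
  exact integrable_finsetSum _ fun p _ => integrable_finsetSum _ fun q _ =>
    (hBint p.1 q.1 p.2 q.2).const_mul _

theorem dotProduct_galerkinMatrix_mulVec {Φ : ι → Ω → ℝ} {B : Ω → Matrix κ κ ℝ}
    (hBint : ∀ i j k l, Integrable (fun ω => B ω k l * Φ i ω * Φ j ω) μ) (z : ι × κ → ℝ) :
    z ⬝ᵥ (galerkinMatrix μ Φ B *ᵥ z) =
      ∫ ω, galerkinExpansion Φ z ω ⬝ᵥ (B ω *ᵥ galerkinExpansion Φ z ω) ∂μ := by
  simp_rw [galerkinExpansion_dotProduct_mulVec]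
  rw [integral_finsetSum _ fun p _ => integrable_finsetSum _ fun q _ =>
    (hBint p.1 q.1 p.2 q.2).const_mul _]
  simp only [dotProduct, mulVec, galerkinMatrix, of_apply, Finset.mul_sum]
  refine Finset.sum_congr rfl fun p _ => ?_
  rw [integral_finsetSum _ fun q _ => (hBint p.1 q.1 p.2 q.2).const_mul _]
  refine Finset.sum_congr rfl fun q _ => ?_
  rw [integral_const_mul]
  ring

theorem dotProduct_galerkinMatrix_mulVec_neg [DecidableEq ι] {Φ : ι → Ω → ℝ}
    {B : Ω → Matrix κ κ ℝ} (hΦL2 : ∀ i, MemLp (Φ i) 2 μ)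
    (hΦortho : ∀ i j, ∫ ω, Φ i ω * Φ j ω ∂μ = if i = j then 1 else 0)
    (hBint : ∀ i j k l, Integrable (fun ω => B ω k l * Φ i ω * Φ j ω) μ)
    (hBneg : ∀ᵐ ω ∂μ, ∀ x : κ → ℝ, x ≠ 0 → x ⬝ᵥ (B ω *ᵥ x) < 0)
    {z : ι × κ → ℝ} (hz : z ≠ 0) : z ⬝ᵥ (galerkinMatrix μ Φ B *ᵥ z) < 0 := by
  rw [dotProduct_galerkinMatrix_mulVec hBint]
  set f := fun ω => galerkinExpansion Φ z ω ⬝ᵥ (B ω *ᵥ galerkinExpansion Φ z ω)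
  have hf_nonpos : ∀ᵐ ω ∂μ, f ω ≤ 0 := hBneg.mono fun ω hω => by
    rcases eq_or_ne (galerkinExpansion Φ z ω) 0 with h | h
    · simp [f, h]
    · exact (hω _ h).le
  refine (integral_nonpos_of_ae hf_nonpos).lt_of_ne fun hf_int => hz ?_
  have hf_zero : (fun ω => -f ω) =ᵐ[μ] 0 := by
    refine (integral_eq_zero_iff_of_nonneg_ae (f := fun ω => -f ω) ?_
      (integrable_galerkinExpansion_dotProduct_mulVec hBint z).neg).mp ?_
    · exact hf_nonpos.mono fun ω hω => by simpa using hω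
    · rw [integral_neg, hf_int, neg_zero]
  refine eq_zero_of_galerkinExpansion_ae_eq_zero hΦL2 hΦortho ?_
  filter_upwards [hf_zero, hBneg] with ω hω hneg
  by_contra hne
  exact (hneg _ hne).ne (neg_eq_zero.mp hω)

end Galerkin

theorem stmt_7_general (n m : ℕ) {Ω : Type*} [MeasurableSpace Ω]
    (μ : Measure Ω)
    (Φ : Fin m → Ω → ℝ)
    (hΦL2 : ∀ i, MemLp (Φ i) 2 μ)
    (hΦortho : ∀ i j, ∫ ω, Φ i ω * Φ j ω ∂μ = if i = j then 1 else 0)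
    (B : Ω → Matrix (Fin n) (Fin n) ℝ)
    (hBint : ∀ i j k l, Integrable (fun ω => B ω k l * Φ i ω * Φ j ω) μ)
    (hBneg : ∀ᵐ ω ∂μ, ∀ z : Fin n → ℝ, z ≠ 0 → z ⬝ᵥ ((B ω + (B ω)ᵀ) *ᵥ z) < 0) :
    ∀ lam : ℂ,
      lam ∈ spectrum ℂ
        ((Matrix.of (fun p q : Fin m × Fin n =>
          ∫ ω, B ω p.2 q.2 * Φ p.1 ω * Φ q.1 ω ∂μ)).map (Complex.ofReal : ℝ → ℂ)) →
      lam.re < 0 := by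
  have hBneg' : ∀ᵐ ω ∂μ, ∀ z : Fin n → ℝ, z ≠ 0 → z ⬝ᵥ (B ω *ᵥ z) < 0 :=
    hBneg.mono fun ω hω z hz => by
      have hsym := hω z hz
      rw [dotProduct_add_transpose_mulVec] at hsym
      linarith
  intro lam hlam
  exact re_lt_zero_of_mem_spectrum_map_ofReal
    (fun z hz => dotProduct_galerkinMatrix_mulVec_neg hΦL2 hΦortho hBint hBneg' hz) hlam

/-- If `Φ₁, …, Φₘ` are orthonormal in `L²(μ)` and the symmetric part of `B(ω)`
is negative definite for a.e. `ω`, then the stochastic Galerkin projection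
`B̂` (blocks `B̂_{ij} = ∫ B Φᵢ Φⱼ dμ`) is a stable matrix: every complex
eigenvalue of `B̂` has negative real part. -/
theorem stmt_7 (n m : ℕ) {Ω : Type*} [MeasurableSpace Ω]
    (μ : Measure Ω) [IsProbabilityMeasure μ]
    (Φ : Fin m → Ω → ℝ) (hΦmeas : ∀ i, Measurable (Φ i))
    (hΦL2 : ∀ i, MemLp (Φ i) 2 μ)
    (hΦortho : ∀ i j, ∫ ω, Φ i ω * Φ j ω ∂μ = if i = j then 1 else 0)
    (B : Ω → Matrix (Fin n) (Fin n) ℝ)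
    (hBmeas : ∀ k l, Measurable (fun ω => B ω k l))
    (hBint : ∀ i j k l, Integrable (fun ω => B ω k l * Φ i ω * Φ j ω) μ)
    (hBneg : ∀ᵐ ω ∂μ, ∀ z : Fin n → ℝ, z ≠ 0 → z ⬝ᵥ ((B ω + (B ω)ᵀ) *ᵥ z) < 0) :
    ∀ lam : ℂ,
      lam ∈ spectrum ℂ
        ((Matrix.of (fun p q : Fin m × Fin n =>
          ∫ ω, B ω p.2 q.2 * Φ p.1 ω * Φ q.1 ω ∂μ)).map (Complex.ofReal : ℝ → ℂ)) →
      lam.re < 0 :=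
  stmt_7_general n m μ Φ hΦL2 hΦortho B hBint hBneg
end

section
/- Let U ⊆ ℝ^q be an open set, ℓ ∈ ℕ, and A, Q : U → ℝ^{n×n} matrix-valued functions all of whose entries are ℓ-times continuously differentiable on U. Suppose that for every p ∈ U the matrix A(p) is stable and Q(p) is symmetric positive definite. Then there exists a matrix-valued function M : U → ℝ^{n×n}, all of whose entries are ℓ-times continuously differentiable on U, such that for every p ∈ U, M(p) is symmetric positive definite and satisfies the Lyapunov equation A(p)ᵀ M(p) + M(p) A(p) + Q(p) = 0. -/
/-
Stability makes the Lyapunov operator `X ↦ AᵀX + XA` injective, hence invertible, and its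
inverse depends smoothly on `A` since inversion is smooth on the units of the finite-dimensional
algebra of operators; this gives existence and smoothness.

Uniqueness and positivity come from the Cayley transform `T = (I + A)(I - A)⁻¹`, a discrete-time
counterpart of `exp (tA)`. With `S = (I - A)⁻¹` one has `TᵀXT = X + 2 Sᵀ(AᵀX + XA)S`, and the
eigenvalues `(1 + λ)/(1 - λ)` of `T` lie in the open unit disc, so `Tᵏ → 0`. A solution of the
homogeneous equation therefore satisfies `X = (Tᵏ)ᵀXTᵏ → 0`. For the solution `M`, the value of
`zᵀMz` drops by `2 (Sz)ᵀQ(Sz) ≥ 0` along `z, Tz, T²z, …` while tending to `0`, which forces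
`zᵀMz ≥ 2 (Sz)ᵀQ(Sz) > 0`.
-/

open Matrix Filter Topology

theorem tendsto_pow_atTop_nhds_zero_of_spectralRadius_lt_one {𝔸 : Type*} [NormedRing 𝔸]
    [NormedAlgebra ℂ 𝔸] [CompleteSpace 𝔸] {a : 𝔸} (h : spectralRadius ℂ a < 1) :
    Tendsto (a ^ ·) atTop (𝓝 0) := by
  obtain ⟨r, hρr, hr⟩ := ENNReal.lt_iff_exists_nnreal_btwn.mp h
  refine squeeze_zero_norm' ?_ (tendsto_pow_atTop_nhds_zero_of_lt_one r.2 (by exact_mod_cast hr))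
  filter_upwards [(spectrum.pow_norm_pow_one_div_tendsto_nhds_spectralRadius a).eventually_lt_const
    hρr, eventually_gt_atTop 0] with k hk hk0
  rw [ENNReal.ofReal_lt_iff_lt_toReal (by positivity) ENNReal.coe_ne_top, ENNReal.coe_toReal,
    one_div] at hk
  simpa using ((Real.rpow_inv_lt_iff_of_pos (norm_nonneg _) r.2 (by positivity)).mp hk).le

theorem contDiffOn_of_isUnit_of_apply_eq {𝕜 E F : Type*} [NontriviallyNormedField 𝕜]
    [CompleteSpace 𝕜] [NormedAddCommGroup E] [NormedSpace 𝕜 E] [NormedAddCommGroup F]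
    [NormedSpace 𝕜 F] [FiniteDimensional 𝕜 F] {U : Set E} {k : WithTop ℕ∞}
    {L : E → Module.End 𝕜 F} {M v : E → F}
    (hL : ∀ x, ContDiffOn 𝕜 k (fun p => L p x) U) (hunit : ∀ p ∈ U, IsUnit (L p))
    (hv : ContDiffOn 𝕜 k v U) (hM : ∀ p ∈ U, L p (M p) = v p) : ContDiffOn 𝕜 k M U := by
  have := FiniteDimensional.complete 𝕜 F
  set L' : E → F →L[𝕜] F := fun p => Module.End.toContinuousLinearMap F (L p)
  have hL' : ContDiffOn 𝕜 k L' U := contDiffOn_clm_apply.mpr hL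
  have hunit' : ∀ p ∈ U, IsUnit (L' p) := fun p hp =>
    (hunit p hp).map (Module.End.toContinuousLinearMap F)
  have hinv : ContDiffOn 𝕜 k (fun p => Ring.inverse (L' p)) U := fun p hp => by
    have := contDiffAt_ringInverse 𝕜 (n := k) (hunit' p hp).unit
    rw [IsUnit.unit_spec] at this
    exact this.comp_contDiffWithinAt p (hL' p hp)
  refine (hinv.clm_apply hv).congr fun p hp => ?_
  rw [← hM p hp]
  exact (DFunLike.congr_fun (Ring.inverse_mul_cancel _ (hunit' p hp)) (M p)).symm

namespace Matrix
variable {n : Type*} [Fintype n]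

theorem dotProduct_mulVec_transpose_mul_mul (P X : Matrix n n ℝ) (w : n → ℝ) :
    w ⬝ᵥ (Pᵀ * X * P) *ᵥ w = (P *ᵥ w) ⬝ᵥ X *ᵥ (P *ᵥ w) := by
  rw [← mulVec_mulVec, ← mulVec_mulVec, dotProduct_mulVec, vecMul_transpose]

variable [DecidableEq n]

theorem mem_spectrum_iff_exists_mulVec_eq_smul {K : Type*} [Field K] (B : Matrix n n K) (μ : K) :
    μ ∈ spectrum K B ↔ ∃ v ≠ 0, B *ᵥ v = μ • v := by
  rw [spectrum.mem_iff, isUnit_iff_isUnit_det, isUnit_iff_ne_zero, not_not,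
    ← exists_mulVec_eq_zero_iff, Algebra.algebraMap_eq_smul_one]
  simp only [sub_mulVec, smul_mulVec, one_mulVec, sub_eq_zero, eq_comm]

section Decay
attribute [local instance] Matrix.linftyOpNormedRing Matrix.linftyOpNormedAlgebra

theorem tendsto_pow_atTop_nhds_zero_of_norm_spectrum_lt_one (B : Matrix n n ℝ)
    (h : ∀ μ ∈ spectrum ℂ (B.map Complex.ofReal), ‖μ‖ < 1) :
    Tendsto (B ^ ·) atTop (𝓝 0) := by
  have hρ : spectralRadius ℂ (B.map Complex.ofReal) < 1 := by
    rcases subsingleton_or_nontrivial (Matrix n n ℂ) with _ | _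
    · simp [spectrum.SpectralRadius.of_subsingleton]
    · exact_mod_cast spectrum.spectralRadius_lt_of_forall_lt _ fun μ hμ => h μ hμ
  have hre : Continuous fun X : Matrix n n ℂ => X.map Complex.re :=
    continuous_id.matrix_map Complex.continuous_re
  convert (hre.tendsto 0).comp (tendsto_pow_atTop_nhds_zero_of_spectralRadius_lt_one hρ) using 1
  · ext k : 1
    rw [Function.comp_apply, show B.map Complex.ofReal = Complex.ofRealHom.mapMatrix B from rfl,
      ← map_pow]
    ext i j
    simp
  · simp

end Decay

theorem eq_zero_of_tendsto_pow {T X : Matrix n n ℝ} (hT : Tendsto (T ^ ·) atTop (𝓝 0))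
    (hX : Tᵀ * X * T = X) : X = 0 := by
  have hpow : ∀ k : ℕ, (T ^ k)ᵀ * X * T ^ k = X := by
    intro k
    induction k with
    | zero => simp
    | succ k ih =>
      rw [pow_succ', transpose_mul, show (T ^ k)ᵀ * Tᵀ * X * (T * T ^ k)
        = (T ^ k)ᵀ * (Tᵀ * X * T) * T ^ k by simp only [mul_assoc], hX, ih]
  have hcont : Continuous fun Y : Matrix n n ℝ => Yᵀ * X * Y := by fun_prop
  have := (hcont.tendsto 0).comp hT
  simp only [Function.comp_def, hpow, transpose_zero, zero_mul] at this
  exact tendsto_nhds_unique tendsto_const_nhds this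

theorem dotProduct_mulVec_nonneg_of_tendsto_pow {T M : Matrix n n ℝ}
    (hT : Tendsto (T ^ ·) atTop (𝓝 0))
    (hM : ∀ w, (T *ᵥ w) ⬝ᵥ M *ᵥ (T *ᵥ w) ≤ w ⬝ᵥ M *ᵥ w) (w : n → ℝ) :
    0 ≤ w ⬝ᵥ M *ᵥ w := by
  have hle : ∀ k : ℕ, (T ^ k *ᵥ w) ⬝ᵥ M *ᵥ (T ^ k *ᵥ w) ≤ w ⬝ᵥ M *ᵥ w := by
    intro k
    induction k with
    | zero => simp
    | succ k ih =>
      rw [pow_succ', ← mulVec_mulVec]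
      exact (hM _).trans ih
  have hcont : Continuous fun Y : Matrix n n ℝ => (Y *ᵥ w) ⬝ᵥ M *ᵥ (Y *ᵥ w) := by fun_prop
  have := (hcont.tendsto 0).comp hT
  simp only [Function.comp_def, zero_mulVec, zero_dotProduct] at this
  exact le_of_tendsto this (Eventually.of_forall hle)

def IsStable (A : Matrix n n ℝ) : Prop :=
  ∀ lam ∈ spectrum ℂ (A.map Complex.ofReal), lam.re < 0

noncomputable def cayley (A : Matrix n n ℝ) : Matrix n n ℝ := (1 + A) * (1 - A)⁻¹

section Cayley
variable {A : Matrix n n ℝ} (hA : IsUnit (1 - A).det)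
include hA

theorem one_sub_mul_cayley : (1 - A) * cayley A = 1 + A := by
  rw [cayley, ← mul_assoc, show (1 - A) * (1 + A) = (1 + A) * (1 - A) by noncomm_ring, mul_assoc,
    mul_nonsing_inv _ hA, mul_one]

theorem cayley_transpose_mul_mul_cayley (X : Matrix n n ℝ) :
    (cayley A)ᵀ * X * cayley A
      = X + (2 : ℝ) • ((1 - A)⁻¹ᵀ * (Aᵀ * X + X * A) * (1 - A)⁻¹) := by
  set S := (1 - A)⁻¹
  have hS : (1 - A) * S = 1 := mul_nonsing_inv _ hA
  calc (cayley A)ᵀ * X * cayley A = Sᵀ * ((1 + A)ᵀ * X * (1 + A)) * S := by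
        simp only [cayley, transpose_mul, S, mul_assoc]
    _ = ((1 - A) * S)ᵀ * X * ((1 - A) * S) + (2 : ℝ) • (Sᵀ * (Aᵀ * X + X * A) * S) := by
        simp only [transpose_mul, transpose_add, transpose_sub, transpose_one, two_smul]
        noncomm_ring
    _ = _ := by rw [hS, transpose_one, one_mul, mul_one]

end Cayley

namespace IsStable
variable {A : Matrix n n ℝ} (hA : A.IsStable)
include hA

theorem isUnit_det_one_sub : IsUnit (1 - A).det := by
  rw [isUnit_iff_ne_zero]
  intro h
  have h1 : (1 : ℂ) ∈ spectrum ℂ (A.map Complex.ofReal) := by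
    rw [spectrum.mem_iff, map_one, isUnit_iff_isUnit_det, isUnit_iff_ne_zero, not_not]
    have := RingHom.map_det Complex.ofRealHom (1 - A)
    rw [map_sub, map_one, h, map_zero] at this
    exact this.symm
  exact absurd (hA 1 h1) (by norm_num)

theorem norm_lt_one_of_mem_spectrum_cayley (μ : ℂ)
    (hμ : μ ∈ spectrum ℂ ((cayley A).map Complex.ofReal)) : ‖μ‖ < 1 := by
  obtain ⟨v, hv0, hv⟩ := (mem_spectrum_iff_exists_mulVec_eq_smul _ _).mp hμ
  set Aℂ := A.map Complex.ofReal
  have hrel : (1 - Aℂ) * (cayley A).map Complex.ofReal = 1 + Aℂ := by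
    have := congrArg Complex.ofRealHom.mapMatrix (one_sub_mul_cayley hA.isUnit_det_one_sub)
    rwa [map_mul, map_sub, map_add, map_one] at this
  have hAv : (μ - 1) • v = (μ + 1) • (Aℂ *ᵥ v) := by
    have := congrArg (· *ᵥ v) hrel
    simp only [← mulVec_mulVec, hv, sub_mulVec, add_mulVec, one_mulVec, mulVec_smul] at this
    linear_combination (norm := module) this
  have hμ1 : μ + 1 ≠ 0 := by
    rintro hμ1
    rw [hμ1, zero_smul, show μ - 1 = -2 by linear_combination hμ1, smul_eq_zero] at hAv
    exact hv0 (hAv.resolve_left (by norm_num))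
  have hlam : (μ - 1) / (μ + 1) ∈ spectrum ℂ Aℂ := by
    refine (mem_spectrum_iff_exists_mulVec_eq_smul _ _).mpr ⟨v, hv0, ?_⟩
    rw [div_eq_inv_mul, mul_smul, hAv, smul_smul, inv_mul_cancel₀ hμ1, one_smul]
  have hre := hA _ hlam
  have hden : 0 < Complex.normSq (μ + 1) := Complex.normSq_pos.mpr hμ1
  -- `Re ((μ - 1) / (μ + 1)) = (‖μ‖² - 1) / ‖μ + 1‖²`
  rw [Complex.div_re, ← add_div, div_neg_iff] at hre
  have hsq : ‖μ‖ ^ 2 < 1 := by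
    rw [Complex.sq_norm, Complex.normSq_apply]
    simp only [Complex.sub_re, Complex.add_re, Complex.one_re, Complex.sub_im, Complex.add_im,
      Complex.one_im, sub_zero, add_zero] at hre
    rcases hre with ⟨-, h⟩ | ⟨h, -⟩
    · linarith
    · nlinarith
  exact (sq_lt_one_iff₀ (norm_nonneg _)).mp hsq

theorem tendsto_cayley_pow : Tendsto (cayley A ^ ·) atTop (𝓝 0) :=
  tendsto_pow_atTop_nhds_zero_of_norm_spectrum_lt_one _ hA.norm_lt_one_of_mem_spectrum_cayley

theorem eq_zero_of_lyapunov {X : Matrix n n ℝ} (h : Aᵀ * X + X * A = 0) : X = 0 :=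
  eq_zero_of_tendsto_pow hA.tendsto_cayley_pow <| by
    rw [cayley_transpose_mul_mul_cayley hA.isUnit_det_one_sub, h, mul_zero, zero_mul, smul_zero,
      add_zero]

theorem transpose_eq_of_lyapunov {M Q : Matrix n n ℝ} (hQ : Qᵀ = Q)
    (h : Aᵀ * M + M * A + Q = 0) : Mᵀ = M := by
  have hT : Aᵀ * Mᵀ + Mᵀ * A + Q = 0 := by
    simpa [transpose_mul, hQ, add_comm] using congrArg transpose h
  refine sub_eq_zero.mp (hA.eq_zero_of_lyapunov ?_)
  calc Aᵀ * (Mᵀ - M) + (Mᵀ - M) * A = (Aᵀ * Mᵀ + Mᵀ * A + Q) - (Aᵀ * M + M * A + Q) := by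
        noncomm_ring
    _ = 0 := by rw [h, hT, sub_zero]

theorem dotProduct_mulVec_pos_of_lyapunov {M Q : Matrix n n ℝ}
    (hQ : ∀ z ≠ 0, 0 < z ⬝ᵥ Q *ᵥ z) (h : Aᵀ * M + M * A + Q = 0) :
    ∀ z ≠ 0, 0 < z ⬝ᵥ M *ᵥ z := by
  set T := cayley A
  set S := (1 - A)⁻¹ with hS
  have hQ_nonneg : ∀ w, 0 ≤ w ⬝ᵥ Q *ᵥ w := fun w => by
    rcases eq_or_ne w 0 with rfl | hw
    · simp
    · exact (hQ w hw).le
  have hstep : ∀ w,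
      w ⬝ᵥ M *ᵥ w = (T *ᵥ w) ⬝ᵥ M *ᵥ (T *ᵥ w) + 2 * ((S *ᵥ w) ⬝ᵥ Q *ᵥ (S *ᵥ w)) := by
    intro w
    rw [← dotProduct_mulVec_transpose_mul_mul, ← dotProduct_mulVec_transpose_mul_mul,
      cayley_transpose_mul_mul_cayley hA.isUnit_det_one_sub, eq_neg_of_add_eq_zero_left h]
    simp only [add_mulVec, smul_mulVec, dotProduct_add, dotProduct_smul, mul_neg, neg_mul,
      neg_mulVec, dotProduct_neg, smul_eq_mul, ← hS]
    ring
  have hM : ∀ w, 0 ≤ w ⬝ᵥ M *ᵥ w :=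
    dotProduct_mulVec_nonneg_of_tendsto_pow hA.tendsto_cayley_pow fun w => by
      linarith [hstep w, hQ_nonneg (S *ᵥ w)]
  intro z hz
  have hSz : S *ᵥ z ≠ 0 := fun h0 => hz <| by
    rw [← one_mulVec z, ← mul_nonsing_inv _ hA.isUnit_det_one_sub, ← mulVec_mulVec, h0,
      mulVec_zero]
  linarith [hstep z, hM (T *ᵥ z), hQ _ hSz]

end IsStable

def lyapunovMap (A : Matrix n n ℝ) : Module.End ℝ (Matrix n n ℝ) :=
  LinearMap.mulLeft ℝ Aᵀ + LinearMap.mulRight ℝ A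

@[simp]
theorem lyapunovMap_apply (A X : Matrix n n ℝ) : lyapunovMap A X = Aᵀ * X + X * A := rfl

theorem IsStable.isUnit_lyapunovMap {A : Matrix n n ℝ} (hA : A.IsStable) :
    IsUnit (lyapunovMap A) :=
  (LinearMap.isUnit_iff_ker_eq_bot _).mpr <|
    LinearMap.ker_eq_bot'.mpr fun _ => hA.eq_zero_of_lyapunov

noncomputable def lyapunovSolution (A Q : Matrix n n ℝ) : Matrix n n ℝ :=
  Ring.inverse (lyapunovMap A) (-Q)

theorem IsStable.lyapunovSolution_spec {A : Matrix n n ℝ} (hA : A.IsStable)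
    (Q : Matrix n n ℝ) :
    Aᵀ * lyapunovSolution A Q + lyapunovSolution A Q * A + Q = 0 := by
  rw [← lyapunovMap_apply, ← eq_neg_iff_add_eq_zero]
  exact DFunLike.congr_fun (Ring.mul_inverse_cancel _ hA.isUnit_lyapunovMap) (-Q)

section Smooth
attribute [local instance] Matrix.normedAddCommGroup Matrix.normedSpace
variable {E : Type*} [NormedAddCommGroup E] [NormedSpace ℝ E] {U : Set E} {k : WithTop ℕ∞}

theorem contDiffOn_iff_forall_entry {m n : Type*} [Fintype m] [Fintype n]
    {M : E → Matrix m n ℝ} :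
    ContDiffOn ℝ k M U ↔ ∀ i j, ContDiffOn ℝ k (fun p => M p i j) U :=
  contDiffOn_pi.trans (forall_congr' fun _ => contDiffOn_pi)

theorem contDiffOn_lyapunovSolution {A Q : E → Matrix n n ℝ}
    (hA : ∀ i j, ContDiffOn ℝ k (fun p => A p i j) U)
    (hQ : ∀ i j, ContDiffOn ℝ k (fun p => Q p i j) U) (hstable : ∀ p ∈ U, (A p).IsStable) :
    ∀ i j, ContDiffOn ℝ k (fun p => lyapunovSolution (A p) (Q p) i j) U := by
  refine contDiffOn_iff_forall_entry.mp <| contDiffOn_of_isUnit_of_apply_eq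
    (L := fun p => lyapunovMap (A p)) (fun X => contDiffOn_iff_forall_entry.mpr fun i j => ?_)
    (fun p hp => (hstable p hp).isUnit_lyapunovMap) (contDiffOn_iff_forall_entry.mpr hQ).neg
    fun p hp => ?_
  · simp only [lyapunovMap_apply, add_apply, mul_apply, transpose_apply]
    exact (ContDiffOn.sum fun l _ => (hA l i).mul contDiffOn_const).add
      (ContDiffOn.sum fun l _ => contDiffOn_const.mul (hA l j))
  · exact eq_neg_of_add_eq_zero_left ((hstable p hp).lyapunovSolution_spec (Q p))

end Smooth

end Matrix

theorem stmt_9_general (n q : ℕ) (ℓ : ℕ) (U : Set (Fin q → ℝ))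
    (A Q : (Fin q → ℝ) → Matrix (Fin n) (Fin n) ℝ)
    (hA : ∀ k l, ContDiffOn ℝ ℓ (fun p => A p k l) U)
    (hQ : ∀ k l, ContDiffOn ℝ ℓ (fun p => Q p k l) U)
    (hAstable : ∀ p ∈ U, ∀ lam : ℂ,
      lam ∈ spectrum ℂ ((A p).map (Complex.ofReal : ℝ → ℂ)) → lam.re < 0)
    (hQsym : ∀ p ∈ U, (Q p)ᵀ = Q p)
    (hQpos : ∀ p ∈ U, ∀ z : Fin n → ℝ, z ≠ 0 → 0 < z ⬝ᵥ (Q p *ᵥ z)) :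
    ∃ M : (Fin q → ℝ) → Matrix (Fin n) (Fin n) ℝ,
      (∀ k l, ContDiffOn ℝ ℓ (fun p => M p k l) U) ∧
      ∀ p ∈ U,
        (M p)ᵀ = M p ∧
        (∀ z : Fin n → ℝ, z ≠ 0 → 0 < z ⬝ᵥ (M p *ᵥ z)) ∧
        (A p)ᵀ * M p + M p * A p + Q p = 0 := by
  refine ⟨fun p => lyapunovSolution (A p) (Q p), contDiffOn_lyapunovSolution hA hQ hAstable,
    fun p hp => ?_⟩
  have hstable : (A p).IsStable := hAstable p hp
  have hM := hstable.lyapunovSolution_spec (Q p)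
  exact ⟨hstable.transpose_eq_of_lyapunov (hQsym p hp) hM,
    hstable.dotProduct_mulVec_pos_of_lyapunov (hQpos p hp) hM, hM⟩

/-- Smooth dependence of the Lyapunov solution: if the entries of `A` and `Q`
are `ℓ`-times continuously differentiable on an open set `U ⊆ ℝ^q`, `A(p)` is
stable and `Q(p)` is symmetric positive definite for every `p ∈ U`, then there
is a matrix-valued function `M` with `ℓ`-times continuously differentiable
entries on `U` such that `M(p)` is symmetric positive definite and solves the
Lyapunov equation `A(p)ᵀ M(p) + M(p) A(p) + Q(p) = 0` for every `p ∈ U`. -/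
theorem stmt_9 (n q : ℕ) (ℓ : ℕ) (U : Set (Fin q → ℝ)) (hU : IsOpen U)
    (A Q : (Fin q → ℝ) → Matrix (Fin n) (Fin n) ℝ)
    (hA : ∀ k l, ContDiffOn ℝ ℓ (fun p => A p k l) U)
    (hQ : ∀ k l, ContDiffOn ℝ ℓ (fun p => Q p k l) U)
    (hAstable : ∀ p ∈ U, ∀ lam : ℂ,
      lam ∈ spectrum ℂ ((A p).map (Complex.ofReal : ℝ → ℂ)) → lam.re < 0)
    (hQsym : ∀ p ∈ U, (Q p)ᵀ = Q p)
    (hQpos : ∀ p ∈ U, ∀ z : Fin n → ℝ, z ≠ 0 → 0 < z ⬝ᵥ (Q p *ᵥ z)) :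
    ∃ M : (Fin q → ℝ) → Matrix (Fin n) (Fin n) ℝ,
      (∀ k l, ContDiffOn ℝ ℓ (fun p => M p k l) U) ∧
      ∀ p ∈ U,
        (M p)ᵀ = M p ∧
        (∀ z : Fin n → ℝ, z ≠ 0 → 0 < z ⬝ᵥ (M p *ᵥ z)) ∧
        (A p)ᵀ * M p + M p * A p + Q p = 0 :=
  stmt_9_general n q ℓ U A Q hA hQ hAstable hQsym hQpos
end

section
/- Let (Ω, 𝒜, μ) be a probability space and Φ₁, …, Φₘ : Ω → ℝ measurable and bounded. Let f : ℝⁿ × Ω → ℝⁿ be such that f(·, ω) is continuously differentiable on ℝⁿ for every ω, the maps ω ↦ f(x, ω) and ω ↦ D_x f(x, ω) are measurable for every x, and there exists a μ-integrable function g : Ω → ℝ with ‖f(x, ω)‖ ≤ g(ω) and ‖D_x f(x, ω)‖ ≤ g(ω) for all x ∈ ℝⁿ and all ω ∈ Ω. Define F : ℝ^{mn} → ℝ^{mn} componentwise by F_i(v) = ∫_Ω f(Σ_{j=1}^m v_j Φ_j(ω), ω) Φ_i(ω) dμ(ω) for v = (v₁ᵀ, …, vₘᵀ)ᵀ with v_j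 ∈ ℝⁿ. Then F is differentiable at every v ∈ ℝ^{mn}, and its Jacobian matrix at v is the block matrix whose (i,j) block equals ∫_Ω D_x f(Σ_{k=1}^m v_k Φ_k(ω), ω) Φ_i(ω) Φ_j(ω) dμ(ω). -/
/-!
With `φ ω = (Φ₁ ω, …, Φₘ ω)`, the Galerkin map is `w ↦ ∫ T_ω (f (S_ω w) ω) dμ`, where the
synthesis `S_ω w = ∑ⱼ wⱼ Φⱼ ω` and the testing map `T_ω y = (y Φᵢ ω)ᵢ` are linear with
norms bounded uniformly in `ω`. By the chain rule the integrand has derivative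
`T_ω ∘ D_x f (S_ω v) ω ∘ S_ω`, dominated by a constant multiple of `g`, so one may
differentiate under the integral sign. That composite is the block matrix `(D_x f Φᵢ Φⱼ)ᵢⱼ`,
and integration commutes with forming the matrix from its entries.
-/

open Matrix MeasureTheory Filter TopologicalSpace

theorem exists_forall_norm_pi_le {ι Ω : Type*} [Fintype ι] {Φ : ι → Ω → ℝ}
    (hΦ : ∀ i, ∃ C, ∀ ω, |Φ i ω| ≤ C) : ∃ C, ∀ ω, ‖(Φ · ω)‖ ≤ C := by
  choose C hC using hΦ
  obtain ⟨K, hK⟩ := Finite.exists_le C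
  refine ⟨max K 0, fun ω => (pi_norm_le_iff_of_nonneg (le_max_right _ _)).2 fun i => ?_⟩
  exact (Real.norm_eq_abs _).trans_le ((hC i ω).trans ((hK i).trans (le_max_left _ _)))

theorem ContinuousLinearMap.opNorm_comp_comp_le_of_le {E E' G G' : Type*}
    [SeminormedAddCommGroup E] [SeminormedAddCommGroup E'] [SeminormedAddCommGroup G]
    [SeminormedAddCommGroup G'] [NormedSpace ℝ E] [NormedSpace ℝ E'] [NormedSpace ℝ G]
    [NormedSpace ℝ G'] {M : G →L[ℝ] G'} {L : E →L[ℝ] G} {A : E' →L[ℝ] E} {a b c : ℝ}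
    (hM : ‖M‖ ≤ b) (hL : ‖L‖ ≤ c) (hA : ‖A‖ ≤ a) :
    ‖M.comp (L.comp A)‖ ≤ b * c * a := by
  have hb : 0 ≤ b := (norm_nonneg _).trans hM
  have hc : 0 ≤ c := (norm_nonneg _).trans hL
  calc ‖M.comp (L.comp A)‖ ≤ ‖M‖ * (‖L‖ * ‖A‖) :=
        (M.opNorm_comp_le _).trans (by gcongr; exact L.opNorm_comp_le A)
    _ ≤ b * c * a := by rw [← mul_assoc]; gcongr

noncomputable def mulVecEntriesCLE (ι : Type*) [Fintype ι] [DecidableEq ι] :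
    (ι → ι → ℝ) ≃L[ℝ] ((ι → ℝ) →L[ℝ] (ι → ℝ)) :=
  (((Matrix.ofLinearEquiv ℝ).trans Matrix.toLin').trans
    LinearMap.toContinuousLinearMap).toContinuousLinearEquiv

theorem mulVecEntriesCLE_apply {ι : Type*} [Fintype ι] [DecidableEq ι] (X : ι → ι → ℝ) :
    mulVecEntriesCLE ι X = LinearMap.toContinuousLinearMap (Matrix.of X).mulVecLin := rfl

section ParametricIntegral

variable {Ω : Type*} [MeasurableSpace Ω] {μ : Measure Ω}

theorem measurable_comp_of_continuous_of_measurable {β γ : Type*}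
    [TopologicalSpace β] [MetrizableSpace β] [MeasurableSpace β] [SecondCountableTopology β]
    [OpensMeasurableSpace β] [MeasurableSpace γ] [TopologicalSpace γ] [PseudoMetrizableSpace γ]
    [BorelSpace γ] {h : β → Ω → γ} (hcont : ∀ ω, Continuous (h · ω))
    (hmeas : ∀ x, Measurable (h x)) {x : Ω → β} (hx : Measurable x) :
    Measurable fun ω => h (x ω) ω :=
  (measurable_uncurry_of_continuous_of_measurable hcont hmeas).comp (hx.prodMk measurable_id)

theorem integral_pi_pi {ι κ : Type*} [Fintype ι] [Fintype κ] {F : Ω → ι → κ → ℝ}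
    (hF : Integrable F μ) : ∫ ω, F ω ∂μ = fun i k => ∫ ω, F ω i k ∂μ := by
  funext i k
  rw [eval_integral hF.eval i, eval_integral (hF.eval i).eval k]

variable {E E' G G' : Type*} [NormedAddCommGroup E] [NormedAddCommGroup E']
  [NormedAddCommGroup G] [NormedAddCommGroup G'] [NormedSpace ℝ E] [NormedSpace ℝ E']
  [NormedSpace ℝ G] [NormedSpace ℝ G']

theorem hasFDerivAt_integral_clm_comp_comp {A : Ω → E' →L[ℝ] E} {M : Ω → G →L[ℝ] G'}
    {a b : ℝ} (hA : ∀ ω, ‖A ω‖ ≤ a) (hM : ∀ ω, ‖M ω‖ ≤ b)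
    {h : E → Ω → G} {h' : E → Ω → E →L[ℝ] G} {g : Ω → ℝ} (hg : Integrable g μ)
    (hh' : ∀ ω x, HasFDerivAt (h · ω) (h' x ω) x) (hh'g : ∀ x ω, ‖h' x ω‖ ≤ g ω) (v : E')
    (hmeas : ∀ w, AEStronglyMeasurable (fun ω => M ω (h (A ω w) ω)) μ)
    (hint : Integrable (fun ω => M ω (h (A ω v) ω)) μ)
    (hmeas' : AEStronglyMeasurable (fun ω => (M ω).comp ((h' (A ω v) ω).comp (A ω))) μ) :
    HasFDerivAt (fun w => ∫ ω, M ω (h (A ω w) ω) ∂μ)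
      (∫ ω, (M ω).comp ((h' (A ω v) ω).comp (A ω)) ∂μ) v :=
  hasFDerivAt_integral_of_dominated_of_fderiv_le (s := Set.univ)
    (bound := fun ω => b * g ω * a) univ_mem (.of_forall hmeas) hint hmeas'
    (ae_of_all _ fun ω _ _ =>
      ContinuousLinearMap.opNorm_comp_comp_le_of_le (hM ω) (hh'g _ ω) (hA ω))
    ((hg.const_mul b).mul_const a)
    (ae_of_all _ fun ω x _ =>
      (M ω).hasFDerivAt.comp x ((hh' ω (A ω x)).comp x (A ω).hasFDerivAt))

end ParametricIntegral

namespace Galerkin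

variable {m : ℕ} (n : ℕ) (φ : Fin m → ℝ)

noncomputable def synthesis : (Fin m × Fin n → ℝ) →L[ℝ] (Fin n → ℝ) :=
  LinearMap.toContinuousLinearMap
    { toFun := fun w l => ∑ j, w (j, l) * φ j
      map_add' := fun w w' => funext fun l => by simp [add_mul, Finset.sum_add_distrib]
      map_smul' := fun c w => funext fun l => by simp [Finset.mul_sum, mul_assoc] }

noncomputable def testing : (Fin n → ℝ) →L[ℝ] (Fin m × Fin n → ℝ) :=
  LinearMap.toContinuousLinearMap
    { toFun := fun y p => y p.2 * φ p.1
      map_add' := fun _ _ => funext fun _ => add_mul _ _ _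
      map_smul' := fun _ _ => funext fun _ => mul_assoc _ _ _ }

variable {n φ}

@[simp] theorem synthesis_apply (w : Fin m × Fin n → ℝ) :
    synthesis n φ w = fun l => ∑ j, w (j, l) * φ j := rfl

@[simp] theorem testing_apply (y : Fin n → ℝ) : testing n φ y = fun p => y p.2 * φ p.1 := rfl

theorem norm_synthesis_le : ‖synthesis n φ‖ ≤ m * ‖φ‖ := by
  refine ContinuousLinearMap.opNorm_le_bound _ (by positivity) fun w => ?_
  refine (pi_norm_le_iff_of_nonneg (by positivity)).2 fun l => ?_
  calc ‖∑ j, w (j, l) * φ j‖ ≤ ∑ j, ‖w (j, l) * φ j‖ := norm_sum_le _ _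
    _ ≤ ∑ _j : Fin m, ‖w‖ * ‖φ‖ := by
        gcongr with j
        rw [norm_mul]
        gcongr
        exacts [norm_le_pi_norm w (j, l), norm_le_pi_norm φ j]
    _ = m * ‖φ‖ * ‖w‖ := by simp; ring

theorem norm_synthesis_le_of_le {C : ℝ} (hC : ‖φ‖ ≤ C) : ‖synthesis n φ‖ ≤ m * C :=
  norm_synthesis_le.trans (mul_le_mul_of_nonneg_left hC m.cast_nonneg)

theorem norm_testing_le : ‖testing n φ‖ ≤ ‖φ‖ := by
  refine ContinuousLinearMap.opNorm_le_bound _ (by positivity) fun y => ?_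
  refine (pi_norm_le_iff_of_nonneg (by positivity)).2 fun p => ?_
  rw [testing_apply, norm_mul, mul_comm]
  gcongr
  exacts [norm_le_pi_norm φ p.1, norm_le_pi_norm y p.2]

theorem testing_comp_mulVec_comp_synthesis (X : Matrix (Fin n) (Fin n) ℝ) :
    (testing n φ).comp ((LinearMap.toContinuousLinearMap X.mulVecLin).comp (synthesis n φ)) =
      mulVecEntriesCLE _ fun p q => X p.2 q.2 * φ p.1 * φ q.1 := by
  ext w p
  simp only [mulVecEntriesCLE_apply, ContinuousLinearMap.coe_comp, Function.comp_apply,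
    LinearMap.coe_toContinuousLinearMap', Matrix.mulVecLin_apply, synthesis_apply, testing_apply,
    mulVec, dotProduct, of_apply, Fintype.sum_prod_type, Finset.mul_sum, Finset.sum_mul]
  rw [Finset.sum_comm]
  exact Finset.sum_congr rfl fun j _ => Finset.sum_congr rfl fun l _ => by ring

variable {Ω : Type*} [MeasurableSpace Ω] {μ : Measure Ω} {Φ : Fin m → Ω → ℝ} {C : ℝ}
  {g : Ω → ℝ}

theorem measurable_synthesis_apply (hΦ : ∀ i, Measurable (Φ i)) (w : Fin m × Fin n → ℝ) :
    Measurable fun ω => synthesis n (Φ · ω) w := by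
  simp only [synthesis_apply]; fun_prop

theorem integrable_testing_comp_synthesis (hΦ : ∀ i, Measurable (Φ i))
    (hC : ∀ ω, ‖(Φ · ω)‖ ≤ C) {f : (Fin n → ℝ) → Ω → (Fin n → ℝ)}
    (hf_cont : ∀ ω, Continuous (f · ω)) (hf_meas : ∀ x, Measurable (f x))
    (hg : Integrable g μ) (hfg : ∀ x ω, ‖f x ω‖ ≤ g ω) (w : Fin m × Fin n → ℝ) :
    Integrable (fun ω => testing n (Φ · ω) (f (synthesis n (Φ · ω) w) ω)) μ := by
  have hfw : Measurable fun ω => f (synthesis n (Φ · ω) w) ω :=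
    measurable_comp_of_continuous_of_measurable hf_cont hf_meas (measurable_synthesis_apply hΦ w)
  refine (hg.const_mul C).mono' ?_ (ae_of_all _ fun ω => ?_)
  · exact (measurable_pi_lambda _ fun p : Fin m × Fin n =>
      ((measurable_pi_apply p.2).comp hfw).mul (hΦ p.1)).aestronglyMeasurable
  · have hT := (norm_testing_le (n := n)).trans (hC ω)
    exact (testing n _).le_of_opNorm_le hT _ |>.trans
      (mul_le_mul_of_nonneg_left (hfg _ ω) ((norm_nonneg _).trans hT))

variable {X : Ω → Matrix (Fin n) (Fin n) ℝ}

theorem integrable_testing_comp_mulVec_comp_synthesis (hΦ : ∀ i, Measurable (Φ i))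
    (hC : ∀ ω, ‖(Φ · ω)‖ ≤ C) (hX : ∀ k l, Measurable fun ω => X ω k l)
    (hg : Integrable g μ)
    (hXg : ∀ ω, ‖LinearMap.toContinuousLinearMap (X ω).mulVecLin‖ ≤ g ω) :
    Integrable (fun ω => (testing n (Φ · ω)).comp
      ((LinearMap.toContinuousLinearMap (X ω).mulVecLin).comp (synthesis n (Φ · ω)))) μ := by
  refine ((hg.const_mul C).mul_const (m * C)).mono' ?_ (ae_of_all _ fun ω =>
    ContinuousLinearMap.opNorm_comp_comp_le_of_le (norm_testing_le.trans (hC ω)) (hXg ω)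
      (norm_synthesis_le_of_le (hC ω)))
  simp only [testing_comp_mulVec_comp_synthesis]
  refine ((mulVecEntriesCLE _).continuous.comp_stronglyMeasurable ?_).aestronglyMeasurable
  exact (measurable_pi_lambda _ fun p : Fin m × Fin n => measurable_pi_lambda _
    fun q : Fin m × Fin n => ((hX p.2 q.2).mul (hΦ p.1)).mul (hΦ q.1)).stronglyMeasurable

theorem integral_testing_comp_mulVec_comp_synthesis (hΦ : ∀ i, Measurable (Φ i))
    (hC : ∀ ω, ‖(Φ · ω)‖ ≤ C) (hX : ∀ k l, Measurable fun ω => X ω k l)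
    (hg : Integrable g μ)
    (hXg : ∀ ω, ‖LinearMap.toContinuousLinearMap (X ω).mulVecLin‖ ≤ g ω) :
    ∫ ω, (testing n (Φ · ω)).comp
      ((LinearMap.toContinuousLinearMap (X ω).mulVecLin).comp (synthesis n (Φ · ω))) ∂μ =
      mulVecEntriesCLE _ fun p q => ∫ ω, X ω p.2 q.2 * Φ p.1 ω * Φ q.1 ω ∂μ := by
  have hint := integrable_testing_comp_mulVec_comp_synthesis hΦ hC hX hg hXg
  simp only [testing_comp_mulVec_comp_synthesis] at hint ⊢
  rw [ContinuousLinearEquiv.integral_comp_comm, integral_pi_pi]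
  simpa using (mulVecEntriesCLE _).symm.toContinuousLinearMap.integrable_comp hint

end Galerkin

open Galerkin in
theorem stmt_13_general (n m : ℕ) {Ω : Type*} [MeasurableSpace Ω]
    (μ : Measure Ω)
    (Φ : Fin m → Ω → ℝ) (hΦmeas : ∀ i, Measurable (Φ i))
    (hΦbdd : ∀ i, ∃ C : ℝ, ∀ ω, |Φ i ω| ≤ C)
    (f : (Fin n → ℝ) → Ω → (Fin n → ℝ))
    (f' : (Fin n → ℝ) → Ω → Matrix (Fin n) (Fin n) ℝ)
    (hf' : ∀ ω x, HasFDerivAt (fun y => f y ω)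
      (LinearMap.toContinuousLinearMap (f' x ω).mulVecLin) x)
    (hf'cont : ∀ ω k l, Continuous (fun x => f' x ω k l))
    (hfmeas : ∀ x k, Measurable (fun ω => f x ω k))
    (hf'meas : ∀ x k l, Measurable (fun ω => f' x ω k l))
    (g : Ω → ℝ) (hg : Integrable g μ)
    (hfbd : ∀ x ω, ‖f x ω‖ ≤ g ω)
    (hf'bd : ∀ x ω, ‖LinearMap.toContinuousLinearMap (f' x ω).mulVecLin‖ ≤ g ω) :
    ∀ v : Fin m × Fin n → ℝ,
      HasFDerivAt
        (fun w : Fin m × Fin n → ℝ => fun p : Fin m × Fin n =>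
          ∫ ω, f (fun l => ∑ j, w (j, l) * Φ j ω) ω p.2 * Φ p.1 ω ∂μ)
        (LinearMap.toContinuousLinearMap
          (Matrix.of (fun p q : Fin m × Fin n =>
            ∫ ω, f' (fun l => ∑ j, v (j, l) * Φ j ω) ω p.2 q.2 *
              Φ p.1 ω * Φ q.1 ω ∂μ)).mulVecLin)
        v := by
  intro v
  obtain ⟨C, hC⟩ := exists_forall_norm_pi_le hΦbdd
  have hF_int := integrable_testing_comp_synthesis hΦmeas hC
    (fun ω => continuous_iff_continuousAt.2 fun x => (hf' ω x).continuousAt)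
    (fun x => measurable_pi_lambda _ (hfmeas x)) hg hfbd
  have hf'_meas (k l : Fin n) : Measurable fun ω => f' (synthesis n (Φ · ω) v) ω k l :=
    measurable_comp_of_continuous_of_measurable (fun ω => hf'cont ω k l) (fun x => hf'meas x k l)
      (measurable_synthesis_apply hΦmeas v)
  have hF : (fun w : Fin m × Fin n → ℝ => fun p : Fin m × Fin n =>
      ∫ ω, f (fun l => ∑ j, w (j, l) * Φ j ω) ω p.2 * Φ p.1 ω ∂μ) =
      fun w => ∫ ω, testing n (Φ · ω) (f (synthesis n (Φ · ω) w) ω) ∂μ :=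
    funext fun w => funext fun p => (eval_integral (hF_int w).eval p).symm
  have hf'_bd (ω : Ω) := hf'bd (synthesis n (Φ · ω) v) ω
  rw [hF]
  have hD_int := integrable_testing_comp_mulVec_comp_synthesis hΦmeas hC hf'_meas hg hf'_bd
  exact (hasFDerivAt_integral_clm_comp_comp (fun ω => norm_synthesis_le_of_le (hC ω))
    (fun ω => norm_testing_le.trans (hC ω)) hg hf' hf'bd v
    (fun w => (hF_int w).aestronglyMeasurable) (hF_int v) hD_int.aestronglyMeasurable
    ).congr_fderiv (integral_testing_comp_mulVec_comp_synthesis hΦmeas hC hf'_meas hg hf'_bd)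

/-- Differentiability of the stochastic Galerkin projection of a nonlinear
right-hand side: if `f(·, ω)` is `C¹` with Jacobian `f'(x, ω)`, with suitable
measurability, an integrable uniform dominating function `g`, and bounded basis
functions `Φᵢ`, then `F` with components
`Fᵢ(v) = ∫ f(∑ⱼ vⱼ Φⱼ(ω), ω) Φᵢ(ω) dμ` is differentiable at every `v`, with
Jacobian the block matrix with blocks `∫ D_x f(∑ₖ vₖ Φₖ(ω), ω) Φᵢ Φⱼ dμ`. -/
theorem stmt_13 (n m : ℕ) {Ω : Type*} [MeasurableSpace Ω]
    (μ : Measure Ω) [IsProbabilityMeasure μ]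
    (Φ : Fin m → Ω → ℝ) (hΦmeas : ∀ i, Measurable (Φ i))
    (hΦbdd : ∀ i, ∃ C : ℝ, ∀ ω, |Φ i ω| ≤ C)
    (f : (Fin n → ℝ) → Ω → (Fin n → ℝ))
    (f' : (Fin n → ℝ) → Ω → Matrix (Fin n) (Fin n) ℝ)
    (hf' : ∀ ω x, HasFDerivAt (fun y => f y ω)
      (LinearMap.toContinuousLinearMap (f' x ω).mulVecLin) x)
    (hf'cont : ∀ ω k l, Continuous (fun x => f' x ω k l))
    (hfmeas : ∀ x k, Measurable (fun ω => f x ω k))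
    (hf'meas : ∀ x k l, Measurable (fun ω => f' x ω k l))
    (g : Ω → ℝ) (hg : Integrable g μ)
    (hfbd : ∀ x ω, ‖f x ω‖ ≤ g ω)
    (hf'bd : ∀ x ω, ‖LinearMap.toContinuousLinearMap (f' x ω).mulVecLin‖ ≤ g ω) :
    ∀ v : Fin m × Fin n → ℝ,
      HasFDerivAt
        (fun w : Fin m × Fin n → ℝ => fun p : Fin m × Fin n =>
          ∫ ω, f (fun l => ∑ j, w (j, l) * Φ j ω) ω p.2 * Φ p.1 ω ∂μ)
        (LinearMap.toContinuousLinearMap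
          (Matrix.of (fun p q : Fin m × Fin n =>
            ∫ ω, f' (fun l => ∑ j, v (j, l) * Φ j ω) ω p.2 q.2 *
              Φ p.1 ω * Φ q.1 ω ∂μ)).mulVecLin)
        v :=
  stmt_13_general n m μ Φ hΦmeas hΦbdd f f' hf' hf'cont hfmeas hf'meas g hg hfbd hf'bd
end
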